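/- Fix an integer N ≥ 4 and define t_k := 1 − 4·(5/2)^{N−2}·(2/5)^{k−1} + 3·5^{N−2}·(1/5)^{k−1} for k ≥ 1 (the impulse response of H^N(z) = 1/(z−1) − 4(5/2)^{N−2}/(z−0.4) + 3·5^{N−2}/(z−0.2)). Let F be a 3×3 real matrix whose characteristic polynomial equals (X−1)(X−2/5)(X−1/5) and let h, g ∈ ℝ^3 satisfy t_k = hᵀF^{k−1}g for all k ≥ 1. Suppose M ≥ 1, P is a 3×M real matrix, A is an M×M real matrix, and b, c ∈ ℝ^M, with all entries of A, b, c nonnegative, such that FP = PA, Pb = g, and cᵀ = hᵀP. Then 2M ≥ N, i.e. M ≥ N/2. -/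

import Mathlib

open Matrix Polynomial

lemma det_ineq_rel (x y : ℕ) (hx : 1 ≤ x) (hxy : x < y) :
    ((5:ℝ)^x - 1) * ((2:ℝ)^y - 1) < ((5:ℝ)^y - 1) * ((2:ℝ)^x - 1) := by
  obtain ⟨d, rfl⟩ : ∃ d, y = x + d + 1 := ⟨y - x - 1, by omega⟩
  set A : ℝ := 2^x with hA
  set B : ℝ := 5^x with hB
  set u : ℝ := 2^(d+1) with hu
  set v : ℝ := 5^(d+1) with hv
  have h2y : (2:ℝ)^(x+d+1) = A * u := by rw [hA, hu, ← pow_add]; ring_nf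
  have h5y : (5:ℝ)^(x+d+1) = B * v := by rw [hB, hv, ← pow_add]; ring_nf
  rw [h2y, h5y]
  have hA2 : 2 ≤ A := by
    calc (2:ℝ) = 2^1 := (pow_one 2).symm
    _ ≤ 2^x := pow_le_pow_right₀ (by norm_num) hx
  have hu2 : 2 ≤ u := by
    calc (2:ℝ) = 2^1 := (pow_one 2).symm
    _ ≤ 2^(d+1) := pow_le_pow_right₀ (by norm_num) (by omega)
  have hBA : A < B := pow_lt_pow_left₀ (by norm_num) (by norm_num) (by omega)
  have hv2u : 2*u ≤ v := by
    have hdv : ((5:ℝ)/2)^(d+1) = v / u := by rw [hv, hu, div_pow]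
    have h52 : (2:ℝ) ≤ ((5:ℝ)/2)^(d+1) := by
      calc (2:ℝ) ≤ (5/2)^1 := by norm_num
      _ ≤ (5/2)^(d+1) := pow_le_pow_right₀ (by norm_num) (by omega)
    have hupos : (0:ℝ) < u := by positivity
    rw [hdv, le_div_iff₀ hupos] at h52
    linarith
  have hBpos : (0:ℝ) < B := by positivity
  have hupos : (0:ℝ) < u := by positivity
  nlinarith [mul_nonneg (mul_nonneg hBpos.le (by linarith : (0:ℝ) ≤ v - 2*u)) (by linarith : (0:ℝ) ≤ A - 1),
    mul_nonneg (mul_nonneg hupos.le hBpos.le) (by linarith : (0:ℝ) ≤ A - 2),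
    mul_pos hupos (by linarith : (0:ℝ) < A)]

lemma det_ineq (m1 m2 m3 : ℕ) (h12 : m1 < m2) (h23 : m2 < m3) :
    ((5:ℝ)^m2 - 5^m1) * ((2:ℝ)^m3 - 2^m1) < ((5:ℝ)^m3 - 5^m1) * ((2:ℝ)^m2 - 2^m1) := by
  obtain ⟨x, rfl⟩ : ∃ x, m2 = m1 + x := ⟨m2 - m1, by omega⟩
  obtain ⟨y, rfl⟩ : ∃ y, m3 = m1 + y := ⟨m3 - m1 + m1 - m1, by omega⟩
  have hx : 1 ≤ x := by omega
  have hxy : x < y := by omega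
  have key := mul_lt_mul_of_pos_left (det_ineq_rel x y hx hxy)
    (mul_pos (pow_pos (by norm_num : (0:ℝ) < 5) m1) (pow_pos (by norm_num : (0:ℝ) < 2) m1))
  have e2 : (2:ℝ)^(m1+x) = 2^m1 * 2^x := pow_add 2 m1 x
  have e2' : (2:ℝ)^(m1+y) = 2^m1 * 2^y := pow_add 2 m1 y
  have e5 : (5:ℝ)^(m1+x) = 5^m1 * 5^x := pow_add 5 m1 x
  have e5' : (5:ℝ)^(m1+y) = 5^m1 * 5^y := pow_add 5 m1 y
  rw [e2, e2', e5, e5']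
  nlinarith [key]

lemma rec_zeros (s : ℕ → ℝ)
    (hrec : ∀ m, s (m+3) = 8/5 * s (m+2) - 17/25 * s (m+1) + 2/25 * s m)
    (m1 m2 m3 m4 : ℕ) (h12 : m1 < m2) (h23 : m2 < m3)
    (hz1 : s m1 = 0) (hz2 : s m2 = 0) (hz3 : s m3 = 0) (hp : 0 < s m4) : False := by
  set e1 : ℝ := (2*s 0 - 15*s 1 + 25*s 2)/12 with he1
  set e2 : ℝ := (-5*s 0 + 30*s 1 - 25*s 2)/3 with he2
  set e3 : ℝ := (10*s 0 - 35*s 1 + 25*s 2)/4 with he3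
  have hgen : ∀ m, s m = e1 + e2*(2/5:ℝ)^m + e3*(1/5:ℝ)^m := by
    have key : ∀ m, s m = e1 + e2*(2/5:ℝ)^m + e3*(1/5:ℝ)^m
        ∧ s (m+1) = e1 + e2*(2/5:ℝ)^(m+1) + e3*(1/5:ℝ)^(m+1)
        ∧ s (m+2) = e1 + e2*(2/5:ℝ)^(m+2) + e3*(1/5:ℝ)^(m+2) := by
      intro m
      induction m with
      | zero =>
        refine ⟨?_, ?_, ?_⟩ <;> · rw [he1, he2, he3]; norm_num; try ring
      | succ n ih =>
        refine ⟨ih.2.1, ih.2.2, ?_⟩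
        have hr := hrec n
        rw [ih.1, ih.2.1, ih.2.2] at hr
        rw [show n+1+2 = n+3 by ring, hr]; ring
    exact fun m => (key m).1
  have mku : ∀ m, s m = 0 → e1*(5:ℝ)^m + e2*(2:ℝ)^m + e3 = 0 := by
    intro m hm
    have hg := hgen m
    rw [hm] at hg
    have h25 : ((2:ℝ)/5)^m * 5^m = 2^m := by rw [← mul_pow]; norm_num
    have h15 : ((1:ℝ)/5)^m * 5^m = 1 := by rw [← mul_pow]; norm_num
    have hg5 := congrArg (fun z => z * (5:ℝ)^m) hg
    linear_combination (-(1:ℝ))*hg5 - e2*h25 - e3*h15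
  have u1 := mku m1 hz1
  have u2 := mku m2 hz2
  have u3 := mku m3 hz3
  have d21 : e1*((5:ℝ)^m2 - 5^m1) + e2*((2:ℝ)^m2 - 2^m1) = 0 := by linarith [u1, u2]
  have d31 : e1*((5:ℝ)^m3 - 5^m1) + e2*((2:ℝ)^m3 - 2^m1) = 0 := by linarith [u1, u3]
  have det := det_ineq m1 m2 m3 h12 h23
  have hdet : ((5:ℝ)^m2 - 5^m1)*((2:ℝ)^m3 - 2^m1) - ((5:ℝ)^m3 - 5^m1)*((2:ℝ)^m2 - 2^m1) ≠ 0 :=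
    ne_of_lt (by linarith)
  have he1z : e1 = 0 := by
    have hmul : e1 * (((5:ℝ)^m2 - 5^m1)*((2:ℝ)^m3 - 2^m1) - ((5:ℝ)^m3 - 5^m1)*((2:ℝ)^m2 - 2^m1)) = 0 := by
      linear_combination ((2:ℝ)^m3 - 2^m1) * d21 - ((2:ℝ)^m2 - 2^m1) * d31
    exact (mul_eq_zero.mp hmul).resolve_right hdet
  have h2lt : (2:ℝ)^m1 < 2^m2 := pow_lt_pow_right₀ (by norm_num) h12
  have he2z : e2 = 0 := by
    rw [he1z] at d21
    have := mul_eq_zero.mp (by linarith [d21] : e2*((2:ℝ)^m2 - 2^m1) = 0)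
    exact this.resolve_right (by linarith)
  have he3z : e3 = 0 := by
    rw [he1z, he2z] at u1; linarith [u1]
  have hg4 := hgen m4
  rw [he1z, he2z, he3z] at hg4
  simp at hg4
  linarith

lemma cube_of_charpoly (F : Matrix (Fin 3) (Fin 3) ℝ)
    (hF : F.charpoly = (X - 1) * (X - C (2 / 5 : ℝ)) * (X - C (1 / 5 : ℝ))) :
    F^3 = (8/5:ℝ) • F^2 - (17/25:ℝ) • F + (2/25:ℝ) • 1 := by
  have h0 := Matrix.aeval_self_charpoly F
  rw [hF] at h0
  simp only [_root_.map_mul, map_sub, aeval_X, aeval_C, _root_.map_one,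
    Algebra.algebraMap_eq_smul_one] at h0
  have expand : (F - 1) * (F - (2/5:ℝ) • 1) * (F - (1/5:ℝ) • 1)
      = F^3 - ((8/5:ℝ) • F^2 - (17/25:ℝ) • F + (2/25:ℝ) • 1) := by
    simp only [mul_sub, sub_mul, smul_mul_assoc, mul_smul_comm, one_mul, mul_one, smul_smul,
      pow_succ, pow_zero]
    module
  rw [expand] at h0
  exact sub_eq_zero.mp h0

/-- Lower bound `M ≥ N/2` for cone-generated positive realizations of
`H^N(z) = 1/(z−1) − 4(5/2)^{N−2}/(z−2/5) + 3·5^{N−2}/(z−1/5)`, whose impulse response is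
`t_k = 1 − 4(5/2)^{N−2}(2/5)^{k−1} + 3·5^{N−2}(1/5)^{k−1}`. -/
theorem cone_generated_lower_bound_HN
    (N : ℕ) (hN : 4 ≤ N) (t : ℕ → ℝ)
    (ht : ∀ k : ℕ, 1 ≤ k →
      t k = 1 - 4 * (5 / 2 : ℝ) ^ (N - 2) * (2 / 5 : ℝ) ^ (k - 1)
              + 3 * (5 : ℝ) ^ (N - 2) * (1 / 5 : ℝ) ^ (k - 1))
    (F : Matrix (Fin 3) (Fin 3) ℝ)
    (hF : F.charpoly = (X - 1) * (X - C (2 / 5 : ℝ)) * (X - C (1 / 5 : ℝ)))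
    (h g : Fin 3 → ℝ)
    (hrealize : ∀ k : ℕ, 1 ≤ k → t k = h ⬝ᵥ (F ^ (k - 1)).mulVec g)
    (M : ℕ) (hM : 1 ≤ M)
    (P : Matrix (Fin 3) (Fin M) ℝ) (A : Matrix (Fin M) (Fin M) ℝ) (b c : Fin M → ℝ)
    (hA : ∀ i j, 0 ≤ A i j) (hb : ∀ i, 0 ≤ b i) (hc : ∀ i, 0 ≤ c i)
    (hFP : F * P = P * A) (hPb : P.mulVec b = g) (hcP : c = Matrix.vecMul h P) :
    N ≤ 2 * M := by
  obtain ⟨n, rfl⟩ : ∃ n, N = n + 4 := ⟨N - 4, by omega⟩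
  -- the sequences γ (rows) and β (columns)
  set γ : ℕ → Fin M → ℝ := fun m => Matrix.vecMul c (A ^ m) with hγ
  set β : ℕ → Fin M → ℝ := fun i => (A ^ i).mulVec b with hβ
  have comm : ∀ m, P * A ^ m = F ^ m * P := by
    intro m
    induction m with
    | zero => simp
    | succ k ih =>
      rw [pow_succ, pow_succ, ← Matrix.mul_assoc, ih, Matrix.mul_assoc, ← hFP, ← Matrix.mul_assoc]
  have γnn : ∀ m j, 0 ≤ γ m j := by
    intro m
    induction m with
    | zero =>
      intro j
      have : γ 0 = c := by rw [hγ]; simp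
      rw [this]; exact hc j
    | succ k ih =>
      intro j
      have hstep : γ (k+1) = Matrix.vecMul (γ k) A := by
        rw [hγ]; simp only; rw [pow_succ, ← Matrix.vecMul_vecMul]
      rw [hstep]
      show 0 ≤ (γ k) ⬝ᵥ (fun i => A i j)
      exact Finset.sum_nonneg fun i _ => mul_nonneg (ih i) (hA i j)
  have βnn : ∀ i j, 0 ≤ β i j := by
    intro i
    induction i with
    | zero =>
      intro j
      have : β 0 = b := by rw [hβ]; simp
      rw [this]; exact hb j
    | succ k ih =>
      intro j
      have hstep : β (k+1) = A.mulVec (β k) := by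
        rw [hβ]; simp only; rw [pow_succ', ← Matrix.mulVec_mulVec]
      rw [hstep]
      show 0 ≤ (fun i' => A j i') ⬝ᵥ (β k)
      exact Finset.sum_nonneg fun i' _ => mul_nonneg (hA j i') (ih i')
  have chain : ∀ l, c ⬝ᵥ (A ^ l).mulVec b = t (l+1) := by
    intro l
    rw [hcP, ← Matrix.dotProduct_mulVec, Matrix.mulVec_mulVec, comm l,
      ← Matrix.mulVec_mulVec, hPb]
    have := hrealize (l+1) (by omega)
    simpa using this.symm
  have dotγβ : ∀ m i, γ m ⬝ᵥ β i = t (m + i + 1) := by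
    intro m i
    have h1 : γ m ⬝ᵥ β i = c ⬝ᵥ (A ^ (m+i)).mulVec b := by
      rw [hγ, hβ]; simp only
      rw [← Matrix.dotProduct_mulVec, Matrix.mulVec_mulVec, ← pow_add]
    rw [h1, chain]
  -- key values of t
  have hpow1 : ((5:ℝ)/2)^(n+2) * ((2:ℝ)/5)^(n+2) = 1 := by rw [← mul_pow]; norm_num
  have hpow2 : ((5:ℝ))^(n+2) * ((1:ℝ)/5)^(n+2) = 1 := by rw [← mul_pow]; norm_num
  have hidx : n + 4 - 2 = n + 2 := by omega
  have tz1 : t (n+3) = 0 := by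
    have := ht (n+3) (by omega)
    rw [hidx, show n+3-1 = n+2 by omega] at this
    rw [this]
    linear_combination (-4:ℝ)*hpow1 + 3*hpow2
  have tz2 : t (n+4) = 0 := by
    have := ht (n+4) (by omega)
    rw [hidx, show n+4-1 = (n+2)+1 by omega, pow_succ, pow_succ] at this
    rw [this]
    linear_combination (-8/5:ℝ)*hpow1 + (3/5)*hpow2
  have tp : 0 < t (n+6) := by
    have hthis := ht (n+6) (by omega)
    rw [hidx, show n+6-1 = (n+2)+3 by omega] at hthis
    have e1 : ((2:ℝ)/5)^((n+2)+3) = (2/5:ℝ)^(n+2)*(2/5:ℝ)^3 := pow_add _ _ _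
    have e2 : ((1:ℝ)/5)^((n+2)+3) = (1/5:ℝ)^(n+2)*(1/5:ℝ)^3 := pow_add _ _ _
    have hval : t (n+6) = 96/125 := by
      rw [hthis]
      linear_combination (-4*((5:ℝ)/2)^(n+2))*e1 + (3*(5:ℝ)^(n+2))*e2
        + (-32/125:ℝ)*hpow1 + (3/125:ℝ)*hpow2
    rw [hval]; norm_num
  -- recurrence for the rows of gamma
  have hcube := cube_of_charpoly F hF
  have hγF : ∀ l, γ l = Matrix.vecMul h (F ^ l * P) := by
    intro l
    rw [hγ]; simp only
    rw [hcP, Matrix.vecMul_vecMul, comm l]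
  have hentry : ∀ l (j : Fin M), γ l j = h ⬝ᵥ (F ^ l).mulVec (fun i => P i j) := by
    intro l j
    rw [hγF l, ← Matrix.vecMul_vecMul]
    show Matrix.vecMul h (F ^ l) ⬝ᵥ (fun i => P i j) = _
    rw [← Matrix.dotProduct_mulVec]
  have hF3 : ∀ m, F ^ (m+3) = (8/5:ℝ) • F^(m+2) - (17/25:ℝ) • F^(m+1) + (2/25:ℝ) • F^m := by
    intro m
    calc F^(m+3) = F^m * F^3 := by rw [← pow_add]
    _ = F^m * ((8/5:ℝ) • F^2 - (17/25:ℝ) • F + (2/25:ℝ) • 1) := by rw [hcube]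
    _ = (8/5:ℝ) • (F^m * F^2) - (17/25:ℝ) • (F^m * F) + (2/25:ℝ) • (F^m * 1) := by
        rw [mul_add, mul_sub, mul_smul_comm, mul_smul_comm, mul_smul_comm]
    _ = (8/5:ℝ) • F^(m+2) - (17/25:ℝ) • F^(m+1) + (2/25:ℝ) • F^m := by
        rw [mul_one, ← pow_add, ← pow_succ]
  have srec : ∀ (j : Fin M) m, γ (m+3) j = 8/5 * γ (m+2) j - 17/25 * γ (m+1) j + 2/25 * γ m j := by
    intro j m
    rw [hentry (m+3) j, hentry (m+2) j, hentry (m+1) j, hentry m j, hF3 m]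
    rw [Matrix.add_mulVec, Matrix.sub_mulVec, Matrix.smul_mulVec,
      Matrix.smul_mulVec, Matrix.smul_mulVec]
    rw [dotProduct_add, dotProduct_sub, dotProduct_smul, dotProduct_smul, dotProduct_smul]
    simp [smul_eq_mul]
  -- choice of indices
  have hex : ∀ k : Fin (n+3), ∃ j : Fin M, 0 < β k.1 j ∧ 0 < γ (n+5-k.1) j ∧
      γ (n+2-k.1) j = 0 ∧ γ (n+3-k.1) j = 0 := by
    intro k
    have hk : k.1 ≤ n+2 := by omega
    have hsum : γ (n+5-k.1) ⬝ᵥ β k.1 = t (n+6) := by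
      rw [dotγβ]; congr 1; omega
    obtain ⟨j, hj⟩ : ∃ j, γ (n+5-k.1) j * β k.1 j ≠ 0 := by
      by_contra hall
      push_neg at hall
      have hz : γ (n+5-k.1) ⬝ᵥ β k.1 = 0 := Finset.sum_eq_zero fun j _ => hall j
      rw [hsum] at hz
      linarith
    have hγj : 0 < γ (n+5-k.1) j :=
      lt_of_le_of_ne (γnn _ j) (fun hEq => hj (by rw [← hEq]; ring))
    have hβj : 0 < β k.1 j :=
      lt_of_le_of_ne (βnn _ j) (fun hEq => hj (by rw [← hEq]; ring))
    refine ⟨j, hβj, hγj, ?_, ?_⟩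
    · have hsum0 : γ (n+2-k.1) ⬝ᵥ β k.1 = 0 := by
        rw [dotγβ, show n+2-k.1 + k.1 + 1 = n+3 by omega, tz1]
      have hterm := (Finset.sum_eq_zero_iff_of_nonneg
        (fun i _ => mul_nonneg (γnn (n+2-k.1) i) (βnn k.1 i))).mp hsum0 j (Finset.mem_univ j)
      rcases mul_eq_zero.mp hterm with h' | h'
      · exact h'
      · exact absurd h' (ne_of_gt hβj)
    · have hsum0 : γ (n+3-k.1) ⬝ᵥ β k.1 = 0 := by
        rw [dotγβ, show n+3-k.1 + k.1 + 1 = n+4 by omega, tz2]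
      have hterm := (Finset.sum_eq_zero_iff_of_nonneg
        (fun i _ => mul_nonneg (γnn (n+3-k.1) i) (βnn k.1 i))).mp hsum0 j (Finset.mem_univ j)
      rcases mul_eq_zero.mp hterm with h' | h'
      · exact h'
      · exact absurd h' (ne_of_gt hβj)
  choose f hf using hex
  have main : ∀ k k' : Fin (n+3), k.1 < k'.1 → f k = f k' → False := by
    intro k k' hlt hEq
    set j := f k with hj
    obtain ⟨_, hpos, hz2', hz3'⟩ := hf k
    obtain ⟨_, _, hz1', _⟩ := hf k'
    rw [← hEq] at hz1'
    have hk : k.1 ≤ n+2 := by omega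
    have hk' : k'.1 ≤ n+2 := by omega
    exact rec_zeros (fun m => γ m j) (srec j)
      (n+2-k'.1) (n+2-k.1) (n+3-k.1) (n+5-k.1)
      (by omega) (by omega) hz1' hz2' hz3' hpos
  have hinj : Function.Injective f := by
    intro k k' hEq
    rcases lt_trichotomy k.1 k'.1 with hlt | heq | hgt
    · exact absurd hEq (fun hh => main k k' hlt hh)
    · exact Fin.ext heq
    · exact absurd hEq.symm (fun hh => main k' k hgt hh)
  have hcard : n + 3 ≤ M := by
    have := Fintype.card_le_of_injective f hinj
    simpa using this
  omega
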